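/- For any linkage type T_Γ = (V,E) with V finite, there is a continuous map Φ̃ : Êmb(T_Γ) → F̃ whose restriction to Emb(T_Γ) (viewed inside its completion) equals q∘Φ, where q : F → F̃ is the quotient map. -/

import Mathlib

/-!
Since `d_path` dominates `min |x - y| 1`, the embedding `e` extends continuously to the
completion. Call `σ` a cluster label of a point `z` of the completion when `z` is a limit of
embeddings with sign vector `σ`. There are finitely many sign vectors, so every `z` has a cluster
label and points near `z` have only cluster labels of `z`. Interleaving two sequences shows that
any two cluster labels of `z` are `∼`-equivalent over `ẽ z`, so `Φ̃ z := [ẽ z, σ]` does not depend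
on the cluster label `σ`, and the local inclusion of cluster labels makes `Φ̃` continuous.
-/

open scoped RealInnerProductSpace ENNReal
open Set Filter

noncomputable section

abbrev Pt (d : ℕ) := EuclideanSpace ℝ (Fin d)
abbrev Conf (V : Type*) [Fintype V] (d : ℕ) := PiLp 2 (fun _ : V => Pt d)

def closedSeg {V : Type*} {d : ℕ} (x : V → Pt d) (e : Sym2 V) : Set (Pt d) :=
  Sym2.lift ⟨fun u v => segment ℝ (x u) (x v), fun u v => segment_symm ℝ (x u) (x v)⟩ e

def openSeg {V : Type*} {d : ℕ} (x : V → Pt d) (e : Sym2 V) : Set (Pt d) :=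
  Sym2.lift ⟨fun u v => openSegment ℝ (x u) (x v), fun u v => openSegment_symm ℝ (x u) (x v)⟩ e

def edgeLen {V : Type*} {d : ℕ} (x : V → Pt d) (e : Sym2 V) : ℝ :=
  Sym2.lift ⟨fun u v => dist (x u) (x v), fun u v => dist_comm (x u) (x v)⟩ e

structure LinkageType (V : Type*) [Fintype V] where
  E : Finset (Sym2 V)
  not_diag : ∀ e ∈ E, ¬ e.IsDiag

def IsLinkEmbedding {V : Type*} [Fintype V] {d : ℕ} (T : LinkageType V) (x : V → Pt d) : Prop :=
  Function.Injective x ∧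
  ∀ e ∈ T.E, ∀ e' ∈ T.E, e ≠ e' →
    openSeg x e ∩ openSeg x e' = ∅ ∧
    ∀ p ∈ closedSeg x e ∩ closedSeg x e', ∃ v, v ∈ e ∧ v ∈ e' ∧ x v = p

def EmbSet {V : Type*} [Fintype V] (T : LinkageType V) (d : ℕ) : Set (Conf V d) :=
  {x | IsLinkEmbedding T x}

def CimmSet {V : Type*} [Fintype V] (T : LinkageType V) (d : ℕ) (ℓ : Sym2 V → ℝ) :
    Set (Conf V d) := {x | ∀ e ∈ T.E, edgeLen x e = ℓ e}

def CSet {V : Type*} [Fintype V] (T : LinkageType V) (d : ℕ) (ℓ : Sym2 V → ℝ) :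
    Set (Conf V d) := CimmSet T d ℓ ∩ EmbSet T d

def pathInf {X : Type*} [EMetricSpace X] (S : Set X) (x y : X) : ℝ≥0∞ :=
  ⨅ (γ : ℝ → X) (_ : ContinuousOn γ (Set.Icc 0 1)) (_ : γ 0 = x) (_ : γ 1 = y)
    (_ : Set.MapsTo γ (Set.Icc 0 1) S), eVariationOn γ (Set.Icc 0 1)

def dpath {X : Type*} [EMetricSpace X] (S : Set X) (x y : X) : ℝ :=
  (min (pathInf S x y) 1).toReal

structure ModelsPathMetric {α : Type*} [EMetricSpace α] (S : Set α) (X : Type*)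
    [MetricSpace X] (e : X → α) : Prop where
  bij : Set.BijOn e Set.univ S
  dist_eq : ∀ a b : X, dist a b = dpath S (e a) (e b)

abbrev Pt3 := EuclideanSpace ℝ (Fin 3)

def cross3 (a b : Pt3) : Pt3 :=
  (WithLp.equiv 2 (Fin 3 → ℝ)).symm
    ![a 1 * b 2 - a 2 * b 1, a 2 * b 0 - a 0 * b 2, a 0 * b 1 - a 1 * b 0]

/-- The sign of a real number, as an integer. -/
def sgn (x : ℝ) : ℤ := if 0 < x then 1 else if x < 0 then -1 else 0

lemma sgn_mem (x : ℝ) : sgn x = -1 ∨ sgn x = 0 ∨ sgn x = 1 := by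
  unfold sgn; split_ifs <;> simp

-- The linking sign `φ(s', s'') ∈ {-1,0,+1}` of the segments `[p₁,p₂]` and `[q₁,q₂]`:
-- `sign(w · (u' × u''))` where `w` joins a nearest pair of points, provided the nearest
-- points are interior to the segments and the segments are not coplanar; `0` otherwise.
open Classical in
noncomputable def segLinkSign (p₁ p₂ q₁ q₂ : Pt3) : ℤ :=
  if h : ∃ ab : Pt3 × Pt3,
      ab.1 ∈ segment ℝ p₁ p₂ ∧ ab.2 ∈ segment ℝ q₁ q₂ ∧
      (∀ p ∈ segment ℝ p₁ p₂, ∀ q ∈ segment ℝ q₁ q₂, dist ab.1 ab.2 ≤ dist p q) ∧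
      ab.1 ∈ openSegment ℝ p₁ p₂ ∧ ab.2 ∈ openSegment ℝ q₁ q₂ ∧
      ¬ Coplanar ℝ ({p₁, p₂, q₁, q₂} : Set Pt3)
  then sgn ⟪h.choose.2 - h.choose.1, cross3 (p₂ - p₁) (q₂ - q₁)⟫
  else 0

lemma segLinkSign_mem (p₁ p₂ q₁ q₂ : Pt3) :
    segLinkSign p₁ p₂ q₁ q₂ = -1 ∨ segLinkSign p₁ p₂ q₁ q₂ = 0 ∨
      segLinkSign p₁ p₂ q₁ q₂ = 1 := by
  unfold segLinkSign
  split_ifs with h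
  · exact sgn_mem _
  · simp


abbrev Sign := {n : ℤ // n = -1 ∨ n = 0 ∨ n = 1}

/-- The set `P` of ordered pairs of distinct edges of `T` having no common vertex. -/
def PairIdx {V : Type} [Fintype V] (T : LinkageType V) : Type :=
  {ξ : Sym2 V × Sym2 V // ξ.1 ∈ T.E ∧ ξ.2 ∈ T.E ∧ ξ.1 ≠ ξ.2 ∧
    ∀ v : V, ¬ (v ∈ ξ.1 ∧ v ∈ ξ.2)}

/-- The linking-sign invariant `φ_ξ(y) ∈ {-1,0,1}` of the two segments of `y` indexed by the
pair of edges `ξ`. -/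
noncomputable def phiXi {V : Type} [Fintype V] (T : LinkageType V) (y : Conf V 3)
    (ξ : PairIdx T) : Sign :=
  ⟨segLinkSign (y (Quot.out ξ.val.1).1) (y (Quot.out ξ.val.1).2)
      (y (Quot.out ξ.val.2).1) (y (Quot.out ξ.val.2).2),
    segLinkSign_mem _ _ _ _⟩

/-- The relation generating the equivalence `∼` on `F = (ℝ³)^V × {-1,0,1}^P`:
`(x,α) ∼ (x,β)` when some `d_path`-Cauchy sequence in `Emb(T_Γ)` converging to `x` in
`(ℝ³)^V` takes the label value `α` and the label value `β` infinitely often. -/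
def blowRel {V : Type} [Fintype V] (T : LinkageType V) (X : Type) [MetricSpace X]
    (e : X → Conf V 3) :
    (Conf V 3 × (PairIdx T → Sign)) → (Conf V 3 × (PairIdx T → Sign)) → Prop :=
  fun a b => a.1 = b.1 ∧ ∃ u : ℕ → X, CauchySeq u ∧
    Filter.Tendsto (fun n => e (u n)) Filter.atTop (nhds a.1) ∧
    ∀ N : ℕ, ∃ m ≥ N, ∃ n ≥ N,
      (∀ ξ : PairIdx T, phiXi T (e (u m)) ξ = a.2 ξ) ∧
      (∀ ξ : PairIdx T, phiXi T (e (u n)) ξ = b.2 ξ)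

open Topology UniformSpace

instance : Finite Sign :=
  inferInstanceAs (Finite ({-1, 0, 1} : Set ℤ))

instance {V : Type} [Fintype V] (T : LinkageType V) : Finite (PairIdx T) :=
  Subtype.finite

lemma edist_le_pathInf {X : Type*} [EMetricSpace X] (S : Set X) (x y : X) :
    edist x y ≤ pathInf S x y :=
  le_iInf fun γ => le_iInf fun _ => le_iInf fun h0 => le_iInf fun h1 => le_iInf fun _ =>
    h0 ▸ h1 ▸ eVariationOn.edist_le γ (by simp) (by simp)

lemma min_dist_le_dpath {X : Type*} [MetricSpace X] (S : Set X) (x y : X) :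
    min (dist x y) 1 ≤ dpath S x y := by
  have hmono : min (edist x y) 1 ≤ min (pathInf S x y) 1 :=
    min_le_min (edist_le_pathInf S x y) le_rfl
  calc min (dist x y) 1 = (min (edist x y) 1).toReal := by
        rw [ENNReal.toReal_min (edist_ne_top x y) ENNReal.one_ne_top, edist_dist,
          ENNReal.toReal_ofReal dist_nonneg, ENNReal.toReal_one]
    _ ≤ dpath S x y :=
        ENNReal.toReal_mono (min_le_right _ _ |>.trans_lt ENNReal.one_lt_top).ne hmono

lemma uniformContinuous_of_min_dist_le {α β : Type*} [PseudoMetricSpace α]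
    [PseudoMetricSpace β] {f : α → β} (h : ∀ a b, min (dist (f a) (f b)) 1 ≤ dist a b) :
    UniformContinuous f := by
  refine Metric.uniformContinuous_iff.2 fun ε hε =>
    ⟨min ε 1, by positivity, fun {a b} hab => ?_⟩
  rcases min_lt_iff.1 ((h a b).trans_lt hab) with hd | hd
  · exact hd.trans_le (min_le_left _ _)
  · exact absurd hd (min_le_right _ _).not_gt

lemma ModelsPathMetric.uniformContinuous {α X : Type*} [MetricSpace α] [MetricSpace X]
    {S : Set α} {e : X → α} (hm : ModelsPathMetric S X e) : UniformContinuous e :=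
  uniformContinuous_of_min_dist_le fun a b => hm.dist_eq a b ▸ min_dist_le_dpath S (e a) (e b)

theorem continuous_quotMk_of_eventually_subset {Z Y Λ : Type*} [TopologicalSpace Z]
    [TopologicalSpace Y] [TopologicalSpace Λ] [Finite Λ] {r : Y × Λ → Y × Λ → Prop}
    {g : Z → Y} (hg : Continuous g) (L : Z → Set Λ) {s : Z → Λ} (hs : ∀ z, s z ∈ L z)
    (hL : ∀ z, ∀ᶠ w in 𝓝 z, L w ⊆ L z)
    (hr : ∀ z, ∀ σ ∈ L z, Quot.mk r (g z, σ) = Quot.mk r (g z, s z)) :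
    Continuous fun z => Quot.mk r (g z, s z) := by
  refine continuous_iff_continuousAt.2 fun z => tendsto_nhds.2 fun U hU hzU => ?_
  have hW : IsOpen (Quot.mk r ⁻¹' U) := hU.preimage continuous_quot_mk
  have hnear : ∀ σ, ∀ᶠ w in 𝓝 z, σ ∈ L z → (g w, σ) ∈ Quot.mk r ⁻¹' U := fun σ =>
    eventually_imp_distrib_left.2 fun hσ =>
      (hg.prodMk continuous_const).continuousAt.preimage_mem_nhds
        (hW.mem_nhds (show Quot.mk r (g z, σ) ∈ U from hr z σ hσ ▸ hzU))
  filter_upwards [eventually_all.2 hnear, hL z] with w hw hLw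
  exact hw _ (hLw (hs w))

namespace UniformSpace.Completion

variable {X Λ : Type*}

def clusterLabels [UniformSpace X] (f : X → Λ) (z : Completion X) : Set Λ :=
  {σ | z ∈ closure (((↑) : X → Completion X) '' (f ⁻¹' {σ}))}

section

variable [UniformSpace X] (f : X → Λ)

lemma mem_clusterLabels_coe (x : X) : f x ∈ clusterLabels f x :=
  subset_closure ⟨x, rfl, rfl⟩

lemma clusterLabels_nonempty [Finite Λ] (z : Completion X) : (clusterLabels f z).Nonempty := by
  have hcover :
      (⋃ σ, ((↑) : X → Completion X) '' (f ⁻¹' {σ})) = range ((↑) : X → Completion X) := by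
    rw [← image_iUnion, ← preimage_iUnion, iUnion_of_singleton, preimage_univ, image_univ]
  have hz : z ∈ closure (⋃ σ, ((↑) : X → Completion X) '' (f ⁻¹' {σ})) := by
    rw [hcover, denseRange_coe.closure_range]
    exact mem_univ z
  rw [closure_iUnion_of_finite] at hz
  obtain ⟨σ, hσ⟩ := mem_iUnion.1 hz
  exact ⟨σ, hσ⟩

lemma eventually_clusterLabels_subset [Finite Λ] (z : Completion X) :
    ∀ᶠ w in 𝓝 z, clusterLabels f w ⊆ clusterLabels f z := by
  refine eventually_all.2 fun σ => ?_
  by_cases hσ : σ ∈ clusterLabels f z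
  · exact Eventually.of_forall fun _ _ => hσ
  · exact (isClosed_closure.isOpen_compl.eventually_mem hσ).mono fun w hw h => absurd h hw

end

lemma exists_seq_tendsto_of_mem_clusterLabels [PseudoMetricSpace X] {f : X → Λ}
    {z : Completion X} {σ : Λ} (hσ : σ ∈ clusterLabels f z) :
    ∃ u : ℕ → X, (∀ n, f (u n) = σ) ∧ Tendsto (fun n => (u n : Completion X)) atTop (𝓝 z) := by
  obtain ⟨v, hv, hvz⟩ := mem_closure_iff_seq_limit.1 hσ
  choose u hu hvu using hv
  exact ⟨u, hu, by simpa only [hvu] using hvz⟩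

end UniformSpace.Completion

open Completion

lemma blowRel_of_mem_clusterLabels {V : Type} [Fintype V] {T : LinkageType V} {X : Type}
    [MetricSpace X] {e : X → Conf V 3} (he : UniformContinuous e)
    {z : Completion X} {σ τ : PairIdx T → Sign}
    (hσ : σ ∈ clusterLabels (fun x => phiXi T (e x)) z)
    (hτ : τ ∈ clusterLabels (fun x => phiXi T (e x)) z) :
    blowRel T X e (Completion.extension e z, σ) (Completion.extension e z, τ) := by
  obtain ⟨p, hpσ, hp⟩ := exists_seq_tendsto_of_mem_clusterLabels hσ
  obtain ⟨q, hqτ, hq⟩ := exists_seq_tendsto_of_mem_clusterLabels hτ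
  set c : ℕ → X := fun n => if Even n then p n else q n with hc
  have hcz : Tendsto (fun n => (c n : Completion X)) atTop (𝓝 z) :=
    (hp.if' hq).congr fun n => (apply_ite _ _ _ _).symm
  have hcauchy : CauchySeq c := by
    have := hcz.cauchySeq
    rwa [CauchySeq, ← Function.comp_def, ← Filter.map_map,
      (isUniformInducing_coe X).cauchy_map_iff] at this
  have hec : Tendsto (fun n => e (c n)) atTop (𝓝 (Completion.extension e z)) := by
    simpa only [Function.comp_def, extension_coe he] using
      ((continuous_extension (f := e)).tendsto z).comp hcz
  refine ⟨rfl, c, hcauchy, hec, fun N => ⟨2 * N, by omega, 2 * N + 1, by omega, ?_, ?_⟩⟩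
  · simp [hc, hpσ]
  · simp [hc, hqτ]

/-- `X` is an abstract metric space identified via `e` with `(Emb(T_Γ), d_path)`, so that
`Êmb(T_Γ)` is `Completion X`. -/
theorem stmt8 {V : Type} [Fintype V] (T : LinkageType V)
    (X : Type) [MetricSpace X] (e : X → Conf V 3)
    (hm : ModelsPathMetric (EmbSet T 3) X e) :
    ∃ Φt : UniformSpace.Completion X → Quot (blowRel T X e),
      Continuous Φt ∧
      ∀ x : X, Φt x = Quot.mk (blowRel T X e) (e x, phiXi T (e x)) := by
  have he := hm.uniformContinuous
  set φ : X → (PairIdx T → Sign) := fun x => phiXi T (e x)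
  set s := fun z => (clusterLabels_nonempty φ z).some
  have hrel : ∀ z, ∀ σ ∈ clusterLabels φ z,
      Quot.mk (blowRel T X e) (Completion.extension e z, σ) =
        Quot.mk _ (Completion.extension e z, s z) :=
    fun z _ hσ =>
      Quot.sound (blowRel_of_mem_clusterLabels he hσ (clusterLabels_nonempty φ z).some_mem)
  refine ⟨fun z => Quot.mk _ (Completion.extension e z, s z),
    continuous_quotMk_of_eventually_subset continuous_extension (clusterLabels φ)
      (fun z => (clusterLabels_nonempty φ z).some_mem) (eventually_clusterLabels_subset φ) hrel,
    fun x => ?_⟩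
  have hx := hrel x (φ x) (mem_clusterLabels_coe φ x)
  simpa only [extension_coe he] using hx.symm

end
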